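/- There exist a constant c > 0 and N₀ ≥ 1 such that for every real N ≥ N₀ the following holds. Define the parallelograms P₁ = {(τ,ξ) ∈ ℝ² : |ξ − N| ≤ N^{−3/2}, |τ − (5N⁴ξ − 4N⁵)| ≤ 1/2}, P₂ = {(τ,ξ) ∈ ℝ² : (−τ,−ξ) ∈ P₁}, and R₁ = {(τ,ξ) ∈ ℝ² : (1/2)N^{−3/2} ≤ ξ ≤ (3/4)N^{−3/2}, |τ − 5N⁴ξ| ≤ 1/2}. Then for every (τ,ξ) ∈ R₁ one has (χ_{P₁} * χ_{P₂})(τ,ξ) ≥ c N^{−3/2}. -/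

import Mathlib

open MeasureTheory Set

noncomputable section

/-- the parallelogram `P₁`. -/
def P1 (N : ℝ) : Set (ℝ × ℝ) :=
  {p | |p.2 - N| ≤ N ^ (-(3:ℝ)/2) ∧ |p.1 - (5 * N ^ 4 * p.2 - 4 * N ^ 5)| ≤ 1/2}

/-- the parallelogram `P₂ = -P₁`. -/
def P2 (N : ℝ) : Set (ℝ × ℝ) := {p | (-p.1, -p.2) ∈ P1 N}

/-- the target region `R₁`. -/
def R1 (N : ℝ) : Set (ℝ × ℝ) :=
  {p | N ^ (-(3:ℝ)/2) / 2 ≤ p.2 ∧ p.2 ≤ 3/4 * N ^ (-(3:ℝ)/2) ∧ |p.1 - 5 * N ^ 4 * p.2| ≤ 1/2}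

/-- convolution on `ℝ²` (real-valued). -/
def convR (f g : ℝ × ℝ → ℝ) : ℝ × ℝ → ℝ := fun p => ∫ q, f q * g (p - q)

/-!
`(χ_{P₁} * χ_{P₂})(p)` is the area of `P₁ ∩ (p + P₁)`. For `p ∈ R₁` the `ξ`-ranges of `P₁` and
`p + P₁` overlap in an interval of length `2N^{-3/2} - p.2 ≥ (5/4) N^{-3/2}`, and over it both sets
are strips of width `1` around lines of the same slope `5N⁴`, offset by `|p.1 - 5N⁴ p.2| ≤ 1/2`;
so they share a strip of width `1/2` there.
-/

theorem convR_indicator_one {A B : Set (ℝ × ℝ)} (hA : MeasurableSet A) (hB : MeasurableSet B)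
    (p : ℝ × ℝ) :
    convR (A.indicator fun _ => 1) (B.indicator fun _ => 1) p
      = volume.real (A ∩ (p - ·) ⁻¹' B) := by
  have hS : MeasurableSet (A ∩ (p - ·) ⁻¹' B) := hA.inter (hB.preimage (by fun_prop))
  rw [← integral_indicator_one hS, convR]
  congr 1 with q
  by_cases hq : q ∈ A <;> by_cases hpq : p - q ∈ B <;> simp [hq, hpq]

def shearedBox (k a b c d : ℝ) : Set (ℝ × ℝ) :=
  {q | q.2 ∈ Ioo a b ∧ q.1 - k * q.2 ∈ Ioo c d}

theorem volume_shearedBox (k a b c d : ℝ) :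
    volume (shearedBox k a b c d) = ENNReal.ofReal (d - c) * ENNReal.ofReal (b - a) := by
  have hf : Measurable fun y : ℝ => k * y + c := by fun_prop
  have hg : Measurable fun y : ℝ => k * y + d := by fun_prop
  have hswap : shearedBox k a b c d
      = Prod.swap ⁻¹' regionBetween (fun y => k * y + c) (fun y => k * y + d) (Ioo a b) := by
    ext ⟨τ, ξ⟩
    simp only [shearedBox, regionBetween, mem_ofPred_eq, mem_preimage, Prod.swap_prod_mk, mem_Ioo]
    constructor <;> rintro ⟨h₁, h₂, h₃⟩ <;> refine ⟨h₁, ?_, ?_⟩ <;> linarith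
  rw [hswap, Measure.volume_eq_prod, Measure.measurePreserving_swap.measure_preimage
    (measurableSet_regionBetween hf hg measurableSet_Ioo).nullMeasurableSet,
    volume_regionBetween_eq_lintegral' hf hg measurableSet_Ioo]
  simp [Pi.sub_apply, add_sub_add_left_eq_sub, Real.volume_Ioo]

theorem measurableSet_P1 (N : ℝ) : MeasurableSet (P1 N) := by
  rw [P1, ofPred_and]
  exact (measurableSet_le (by fun_prop) measurable_const).inter
    (measurableSet_le (by fun_prop) measurable_const)

theorem measurableSet_P2 (N : ℝ) : MeasurableSet (P2 N) :=
  (measurableSet_P1 N).preimage (by fun_prop)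

theorem P1_subset_shearedBox (N : ℝ) :
    P1 N ⊆ shearedBox (5 * N ^ 4) (N - N ^ (-(3:ℝ)/2) - 1) (N + N ^ (-(3:ℝ)/2) + 1)
      (-4 * N ^ 5 - 1) (-4 * N ^ 5 + 1) := by
  rintro q ⟨hξ, hτ⟩
  rw [abs_le] at hξ hτ
  exact ⟨⟨by linarith, by linarith⟩, ⟨by linarith, by linarith⟩⟩

theorem volume_P1_lt_top (N : ℝ) : volume (P1 N) < ⊤ :=
  (measure_mono (P1_subset_shearedBox N)).trans_lt (by
    rw [volume_shearedBox]; exact ENNReal.mul_lt_top ENNReal.ofReal_lt_top ENNReal.ofReal_lt_top)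

/-- The offset `max (p.1 - 5N⁴ p.2) 0` puts the strip of width `1/2` inside both the strip of
`P₁` and its translate by `p`. -/
theorem shearedBox_subset_P1_inter {N : ℝ} {p : ℝ × ℝ} (hp : p ∈ R1 N) :
    shearedBox (5 * N ^ 4) (N + p.2 - N ^ (-(3:ℝ)/2)) (N + N ^ (-(3:ℝ)/2))
      (max (p.1 - 5 * N ^ 4 * p.2) 0 - 4 * N ^ 5 - 1/2) (max (p.1 - 5 * N ^ 4 * p.2) 0 - 4 * N ^ 5)
      ⊆ P1 N ∩ (p - ·) ⁻¹' P2 N := by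
  set m := max (p.1 - 5 * N ^ 4 * p.2) 0
  obtain ⟨hp₁, hp₂, hp₃⟩ := hp
  rw [abs_le] at hp₃
  have hm₁ : p.1 - 5 * N ^ 4 * p.2 ≤ m := le_max_left _ _
  have hm₂ : m ≤ 1/2 := max_le hp₃.2 (by norm_num)
  have hm₃ : 0 ≤ m := le_max_right _ _
  have hm₄ : m ≤ p.1 - 5 * N ^ 4 * p.2 + 1/2 := max_le (by linarith) (by linarith)
  rintro ⟨τ, ξ⟩ ⟨⟨hξ₁, hξ₂⟩, ⟨hτ₁, hτ₂⟩⟩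
  refine ⟨⟨abs_le.2 ⟨?_, ?_⟩, abs_le.2 ⟨?_, ?_⟩⟩, abs_le.2 ⟨?_, ?_⟩, abs_le.2 ⟨?_, ?_⟩⟩ <;>
    simp only [Prod.fst_sub, Prod.snd_sub, neg_sub] at * <;> linarith

theorem le_volume_real_P1_inter {N : ℝ} {p : ℝ × ℝ} (hp : p ∈ R1 N) :
    N ^ (-(3:ℝ)/2) / 2 ≤ volume.real (P1 N ∩ (p - ·) ⁻¹' P2 N) := by
  have hfin : volume (P1 N ∩ (p - ·) ⁻¹' P2 N) ≠ ⊤ :=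
    (measure_mono inter_subset_left).trans_lt (volume_P1_lt_top N) |>.ne
  have hbox := shearedBox_subset_P1_inter hp
  have hp₁ : N ^ (-(3:ℝ)/2) / 2 ≤ p.2 := hp.1
  have hp₂ : p.2 ≤ 3/4 * N ^ (-(3:ℝ)/2) := hp.2.1
  set δ := N ^ (-(3:ℝ)/2)
  set m := max (p.1 - 5 * N ^ 4 * p.2) 0
  calc δ / 2 ≤ 1/2 * (N + δ - (N + p.2 - δ)) := by linarith
    _ = volume.real
          (shearedBox (5 * N ^ 4) (N + p.2 - δ) (N + δ) (m - 4 * N ^ 5 - 1/2) (m - 4 * N ^ 5)) := by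
        rw [measureReal_def, volume_shearedBox, ENNReal.toReal_mul, ENNReal.toReal_ofReal,
          ENNReal.toReal_ofReal] <;> linarith
    _ ≤ volume.real (P1 N ∩ (p - ·) ⁻¹' P2 N) := measureReal_mono hbox hfin

theorem stmt19 :
    ∃ c : ℝ, 0 < c ∧ ∃ N₀ : ℝ, 1 ≤ N₀ ∧ ∀ N : ℝ, N₀ ≤ N → ∀ p ∈ R1 N,
      c * N ^ (-(3:ℝ)/2)
        ≤ convR ((P1 N).indicator fun _ => (1:ℝ)) ((P2 N).indicator fun _ => (1:ℝ)) p := by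
  refine ⟨1/2, by norm_num, 1, le_rfl, fun N _ p hp => ?_⟩
  rw [convR_indicator_one (measurableSet_P1 N) (measurableSet_P2 N)]
  linarith [le_volume_real_P1_inter hp]
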